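/- arXiv:1811.02664 — 2 statements merged into one kernel-verified Lean document; each statement's English description precedes it below -/
import Mathlib

section
/- Let n - 1 > k ≥ 2 with k even. Then the diameter of the Harary graph H_{k,n} equals ⌊(n+k-2)/k⌋. -/
/-!
Moving along the shorter arc, one edge of `H_{k,n}` covers at most `k/2` units of circular
distance, and that many units can always be covered. Hence the graph distance is
`⌈circDist / (k/2)⌉`, so the diameter is `⌈⌊n/2⌋ / (k/2)⌉`, which for even `k` equals
`⌊(n+k-2)/k⌋`.
-/

open Finset SimpleGraph

/-- The status of a vertex: sum of distances to all other vertices. -/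
noncomputable def status {V : Type*} [Fintype V] (G : SimpleGraph V) (x : V) : ℕ :=
  ∑ y, G.dist x y

/-- The Wiener index: sum of distances over unordered pairs of vertices. -/
noncomputable def wiener {V : Type*} [Fintype V] [DecidableEq V] (G : SimpleGraph V) : ℚ :=
  (∑ p ∈ Finset.univ.offDiag, (G.dist p.1 p.2 : ℚ)) / 2

/-- Eccentricity of a vertex. -/
noncomputable def ecc {V : Type*} [Fintype V] (G : SimpleGraph V) (x : V) : ℕ :=
  Finset.univ.sup (fun y => G.dist x y)

/-- Diameter: maximum distance between pairs of vertices. -/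
noncomputable def graphDiam {V : Type*} [Fintype V] (G : SimpleGraph V) : ℕ :=
  Finset.univ.sup (fun p : V × V => G.dist p.1 p.2)

/-- The set of vertices at distance exactly `i` from `x`. -/
noncomputable def sphere {V : Type*} [Fintype V] [DecidableEq V] (G : SimpleGraph V) (x : V) (i : ℕ) :
    Finset V :=
  Finset.univ.filter (fun y => G.dist x y = i)

/-- `G` is `k`-connected: more than `k` vertices and removing any `k-1` vertices
leaves a connected graph. -/
def IsKConnected {V : Type*} [Fintype V] (G : SimpleGraph V) (k : ℕ) : Prop :=
  k < Fintype.card V ∧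
    ∀ S : Finset V, S.card ≤ k - 1 → (G.induce ((↑S : Set V)ᶜ)).Connected
/-- Circular distance between two positions on a cycle of length `n`. -/
def circDist (n : ℕ) (i j : Fin n) : ℕ :=
  min ((i.val + n - j.val) % n) ((j.val + n - i.val) % n)

lemma circDist_comm (n : ℕ) (i j : Fin n) : circDist n i j = circDist n j i := by
  unfold circDist; exact min_comm _ _

/-- The Harary graph `H_{k,n}` for `k` even: each vertex is adjacent to the
nearest `k/2` vertices in each direction around the circle. -/
def hararyEven (k n : ℕ) : SimpleGraph (Fin n) where
  Adj i j := i ≠ j ∧ circDist n i j ≤ k / 2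
  symm := ⟨by
    intro i j h
    exact ⟨h.1.symm, by rw [circDist_comm]; exact h.2⟩⟩
  loopless := ⟨fun i h => h.1 rfl⟩

/-- The Harary graph `H_{k,n}` for `k` odd and `n` even: each vertex is adjacent to
the nearest `(k-1)/2` vertices in each direction and to the diametrically opposite
vertex. -/
def hararyOddEven (k n : ℕ) : SimpleGraph (Fin n) where
  Adj i j := i ≠ j ∧ (circDist n i j ≤ (k - 1) / 2 ∨ circDist n i j = n / 2)
  symm := ⟨by
    intro i j h
    refine ⟨h.1.symm, ?_⟩
    rw [circDist_comm]; exact h.2⟩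
  loopless := ⟨fun i h => h.1 rfl⟩

/-- The Harary graph `H_{k,n}` for `k` and `n` both odd: obtained from `H_{k-1,n}` by
adding an edge between vertices `a` and `a + (n-1)/2` for `0 ≤ a ≤ (n-1)/2`. -/
def hararyOddOdd (k n : ℕ) : SimpleGraph (Fin n) where
  Adj i j := i ≠ j ∧ (circDist n i j ≤ (k - 1) / 2 ∨
    ∃ a : Fin n, a.val ≤ (n - 1) / 2 ∧
      ((i = a ∧ j.val = (a.val + (n - 1) / 2) % n) ∨
       (j = a ∧ i.val = (a.val + (n - 1) / 2) % n)))
  symm := ⟨by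
    intro i j h
    refine ⟨h.1.symm, ?_⟩
    rcases h.2 with h2 | ⟨a, ha, hc⟩
    · left; rw [circDist_comm]; exact h2
    · right; exact ⟨a, ha, hc.symm⟩⟩
  loopless := ⟨fun i h => h.1 rfl⟩

section CircDist

variable {n : ℕ}

lemma circDist_eq_min (i j : Fin n) :
    circDist n i j = min (Nat.dist i j) (n - Nat.dist i j) := by
  have hi := i.isLt; have hj := j.isLt
  unfold circDist Nat.dist
  rcases lt_trichotomy i.val j.val with h | h | h
  · rw [Nat.mod_eq_of_lt (a := i.val + n - j.val) (by omega),
      show j.val + n - i.val = j.val - i.val + n by omega, Nat.add_mod_right,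
      Nat.mod_eq_of_lt (by omega)]
    omega
  · rw [show i.val + n - j.val = n by omega, show j.val + n - i.val = n by omega, Nat.mod_self]
    omega
  · rw [Nat.mod_eq_of_lt (a := j.val + n - i.val) (by omega),
      show i.val + n - j.val = i.val - j.val + n by omega, Nat.add_mod_right,
      Nat.mod_eq_of_lt (by omega)]
    omega

lemma circDist_le_half (i j : Fin n) : circDist n i j ≤ n / 2 := by
  rw [circDist_eq_min]; unfold Nat.dist; omega

lemma circDist_eq_zero_iff {i j : Fin n} : circDist n i j = 0 ↔ i = j := by
  have hi := i.isLt; have hj := j.isLt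
  rw [circDist_eq_min, Fin.ext_iff]; unfold Nat.dist; omega

lemma circDist_triangle (a b c : Fin n) :
    circDist n a c ≤ circDist n a b + circDist n b c := by
  have := a.isLt; have := b.isLt; have := c.isLt
  simp only [circDist_eq_min, Nat.dist]; omega

lemma exists_circDist_eq_half (hn : 0 < n) : ∃ i j : Fin n, circDist n i j = n / 2 :=
  ⟨⟨0, hn⟩, ⟨n / 2, by omega⟩, by rw [circDist_eq_min]; unfold Nat.dist; simp; omega⟩

lemma exists_circDist_eq_sub (i j : Fin n) {t : ℕ} (ht : t ≤ circDist n i j) :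
    ∃ l : Fin n, circDist n i l = t ∧ circDist n l j = circDist n i j - t := by
  have hi := i.isLt; have hj := j.isLt
  have hc := circDist_eq_min i j
  obtain ⟨e, he, hie, hej⟩ : ∃ e < n, min (Nat.dist i e) (n - Nat.dist i e) = t ∧
      min (Nat.dist e j) (n - Nat.dist e j) = circDist n i j - t := by
    unfold Nat.dist at *
    by_cases hij : i.val ≤ j.val
    · by_cases hshort : j.val - i.val ≤ n - (j.val - i.val)
      · exact ⟨i + t, by omega, by omega, by omega⟩
      · by_cases hwrap : t ≤ i.val
        · exact ⟨i - t, by omega, by omega, by omega⟩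
        · exact ⟨i + n - t, by omega, by omega, by omega⟩
    · by_cases hshort : i.val - j.val ≤ n - (i.val - j.val)
      · exact ⟨i - t, by omega, by omega, by omega⟩
      · by_cases hwrap : i.val + t < n
        · exact ⟨i + t, by omega, by omega, by omega⟩
        · exact ⟨i + t - n, by omega, by omega, by omega⟩
  exact ⟨⟨e, he⟩, by rwa [circDist_eq_min], by rwa [circDist_eq_min]⟩

end CircDist

section HararyEven

variable {k n : ℕ}

lemma circDist_le_mul_length {i j : Fin n} (w : (hararyEven k n).Walk i j) :
    circDist n i j ≤ k / 2 * w.length := by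
  induction w with
  | nil => simp [circDist_eq_zero_iff]
  | @cons a b c hab p ih =>
    calc circDist n a c ≤ circDist n a b + circDist n b c := circDist_triangle a b c
      _ ≤ k / 2 + k / 2 * p.length := Nat.add_le_add hab.2 ih
      _ = k / 2 * (Walk.cons hab p).length := by rw [Walk.length_cons]; ring

lemma exists_walk_length_le {c : ℕ} :
    ∀ {i j : Fin n}, circDist n i j ≤ k / 2 * c → ∃ w : (hararyEven k n).Walk i j, w.length ≤ c := by
  induction c with
  | zero =>
    intro i j h
    obtain rfl := circDist_eq_zero_iff.mp (by simpa using h)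
    exact ⟨Walk.nil, le_rfl⟩
  | succ c ih =>
    intro i j h
    by_cases hij : i = j
    · subst hij; exact ⟨Walk.nil, Nat.zero_le _⟩
    have hpos : 0 < circDist n i j := Nat.pos_of_ne_zero (circDist_eq_zero_iff.not.mpr hij)
    have hm : 0 < k / 2 := by
      by_contra! h0
      exact hij (circDist_eq_zero_iff.mp (by simpa [Nat.le_zero.mp h0] using h))
    obtain ⟨l, hil, hlj⟩ := exists_circDist_eq_sub i j (min_le_left (circDist n i j) (k / 2))
    have hadj : (hararyEven k n).Adj i l :=
      ⟨fun hl => by rw [← hl, circDist_eq_zero_iff.mpr rfl] at hil; omega,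
        hil ▸ min_le_right _ _⟩
    obtain ⟨w, hw⟩ := ih (i := l) (j := j) (by rw [Nat.mul_succ] at h; omega)
    exact ⟨Walk.cons hadj w, by rw [Walk.length_cons]; omega⟩

lemma hararyEven_dist_le_iff (hk : 0 < k / 2) (i j : Fin n) {c : ℕ} :
    (hararyEven k n).dist i j ≤ c ↔ circDist n i j ≤ k / 2 * c := by
  constructor
  · intro h
    obtain ⟨w, _⟩ := exists_walk_length_le (k := k) (Nat.le_mul_of_pos_left (circDist n i j) hk)
    obtain ⟨p, hp⟩ := Reachable.exists_walk_length_eq_dist ⟨w⟩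
    exact (circDist_le_mul_length p).trans (Nat.mul_le_mul_left _ (hp ▸ h))
  · intro h
    obtain ⟨w, hw⟩ := exists_walk_length_le h
    exact (dist_le w).trans hw

lemma graphDiam_le_iff {V : Type*} [Fintype V] (G : SimpleGraph V) {c : ℕ} :
    graphDiam G ≤ c ↔ ∀ u v, G.dist u v ≤ c := by
  simp [graphDiam, Finset.sup_le_iff]

lemma hararyEven_graphDiam_le_iff (hk : 0 < k / 2) (hn : 0 < n) {c : ℕ} :
    graphDiam (hararyEven k n) ≤ c ↔ n / 2 ≤ k / 2 * c := by
  simp only [graphDiam_le_iff, hararyEven_dist_le_iff hk]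
  obtain ⟨i, j, hij⟩ := exists_circDist_eq_half hn
  exact ⟨fun h => hij ▸ h i j, fun h u v => (circDist_le_half u v).trans h⟩

end HararyEven

/-- For `k` even, `n - 1 > k ≥ 2`, the Harary graph `H_{k,n}` has diameter
`⌊(n+k-2)/k⌋`. -/
theorem hararyEven_diam (k n : ℕ) (hk : 2 ≤ k) (hke : Even k) (hn : k < n - 1) :
    graphDiam (hararyEven k n) = (n + k - 2) / k := by
  obtain ⟨m, rfl⟩ := hke
  have hm : (m + m) / 2 = m := by omega
  refine eq_of_forall_ge_iff fun c => ?_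
  rw [hararyEven_graphDiam_le_iff (by omega) (by omega), hm,
    Nat.div_le_iff_le_mul_add_pred two_pos, Nat.div_le_iff_le_mul_add_pred (by omega), add_mul]
  omega
end

section
/- Let n - 1 > k ≥ 3 with k odd and n even, and suppose k + 1 < n ≤ 3k - 1. Then the Harary graph H_{k,n} has diameter 2, every vertex has status 2n - k - 2, and W(H_{k,n}) = (1/2)·n·(2n-k-2). -/
open Finset SimpleGraph

/-! Write `r = (k - 1) / 2` and `m = n / 2`, so that `n ≤ 3k - 1` reads `m ≤ 3r + 1`. The vertex
`i` is adjacent to `i + d` exactly when the circular length `min d (n - d)` is at most `r` or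
equal to `m`. Two non-adjacent vertices at circular length `ℓ ∈ (r, m)` have a common neighbour:
a step of length `r` when `ℓ ≤ 2r`, and the antipode otherwise, since then
`m - ℓ < m - 2r ≤ r + 1`. So the diameter is `2`, and in the `k`-regular graph every vertex has
`k` vertices at distance `1` and `n - 1 - k` at distance `2`, i.e. status `2n - k - 2`; the Wiener
index is half the sum of the statuses. -/

namespace SimpleGraph

variable {V : Type*} {G : SimpleGraph V}

theorem dist_eq_two_of_adj_of_adj {u v w : V} (huv : u ≠ v) (hnadj : ¬G.Adj u v)
    (huw : G.Adj u w) (hwv : G.Adj w v) : G.dist u v = 2 := by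
  rw [dist, ENat.toNat_eq_iff two_ne_zero]
  exact edist_eq_two_iff.2 ⟨huv, hnadj, w, G.mem_commonNeighbors.2 ⟨huw, hwv.symm⟩⟩

theorem dist_le_two (hcommon : ∀ u v, u ≠ v → ¬G.Adj u v → ∃ w, G.Adj u w ∧ G.Adj w v)
    (u v : V) : G.dist u v ≤ 2 := by
  by_cases huv : u = v
  · simp [huv]
  by_cases hadj : G.Adj u v
  · simp [dist_eq_one_iff_adj.2 hadj]
  obtain ⟨w, huw, hwv⟩ := hcommon u v huv hadj
  exact (dist_eq_two_of_adj_of_adj huv hadj huw hwv).le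

end SimpleGraph

section DiameterTwo

variable {V : Type*} [Fintype V] {G : SimpleGraph V}

theorem graphDiam_eq_two
    (hcommon : ∀ u v, u ≠ v → ¬G.Adj u v → ∃ w, G.Adj u w ∧ G.Adj w v)
    (hnot : ∃ u v, u ≠ v ∧ ¬G.Adj u v) : graphDiam G = 2 := by
  obtain ⟨u, v, huv, hadj⟩ := hnot
  obtain ⟨w, huw, hwv⟩ := hcommon u v huv hadj
  refine le_antisymm (Finset.sup_le fun p _ => dist_le_two hcommon p.1 p.2) ?_
  rw [← dist_eq_two_of_adj_of_adj huv hadj huw hwv]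
  exact Finset.le_sup (f := fun p : V × V => G.dist p.1 p.2) (Finset.mem_univ (u, v))

theorem status_add_degree [DecidableEq V] [DecidableRel G.Adj]
    (hcommon : ∀ u v, u ≠ v → ¬G.Adj u v → ∃ w, G.Adj u w ∧ G.Adj w v) (u : V) :
    status G u + G.degree u = 2 * (Fintype.card V - 1) := by
  have hdist (v : V) : G.dist u v + (if G.Adj u v then 1 else 0) = if u = v then 0 else 2 := by
    by_cases huv : u = v
    · simp [huv]
    by_cases hadj : G.Adj u v
    · simp [huv, hadj, dist_eq_one_iff_adj.2 hadj]
    obtain ⟨w, huw, hwv⟩ := hcommon u v huv hadj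
    simp [huv, hadj, dist_eq_two_of_adj_of_adj huv hadj huw hwv]
  calc status G u + G.degree u = ∑ v, (G.dist u v + if G.Adj u v then 1 else 0) := by
        rw [Finset.sum_add_distrib, Finset.sum_boole, ← card_neighborFinset_eq_degree,
          neighborFinset_eq_filter]
        rfl
    _ = ∑ v, if u = v then 0 else 2 := Finset.sum_congr rfl fun v _ => hdist v
    _ = 2 * (Fintype.card V - 1) := by
        rw [Finset.sum_ite, Finset.sum_const_zero, zero_add, Finset.sum_const, Finset.filter_ne,
          Finset.card_erase_of_mem (Finset.mem_univ u), Finset.card_univ, smul_eq_mul, mul_comm]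

theorem wiener_eq_sum_status [DecidableEq V] (G : SimpleGraph V) :
    wiener G = (∑ u, (status G u : ℚ)) / 2 := by
  unfold wiener status
  push_cast
  rw [Finset.sum_subset (Finset.subset_univ _), Fintype.sum_prod_type]
  intro p _ hp
  have hdiag : p.1 = p.2 := by simpa [Finset.mem_offDiag] using hp
  simp [hdiag]

end DiameterTwo

theorem Fin.val_sub_eq_ite {n : ℕ} (a b : Fin n) :
    (a - b).val = if b.val ≤ a.val then a.val - b.val else n + a.val - b.val := by
  split_ifs with h
  · exact Fin.sub_val_of_le h
  · exact Fin.coe_sub_iff_lt.2 (not_le.1 h)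

variable {k n : ℕ}

def IsHararyOddEvenOffset (k n d : ℕ) : Prop :=
  d ≠ 0 ∧ (min d (n - d) ≤ (k - 1) / 2 ∨ min d (n - d) = n / 2)

theorem circDist_eq_min_val_sub (i j : Fin n) :
    circDist n i j = min (j - i).val (n - (j - i).val) := by
  have hi : (i + n - j) % n = (i - j).val := by rw [Fin.val_sub]; congr 1; omega
  have hj : (j + n - i) % n = (j - i).val := by rw [Fin.val_sub]; congr 1; omega
  rw [circDist, hi, hj, Fin.val_sub_eq_ite, Fin.val_sub_eq_ite]
  split_ifs <;> omega

theorem hararyOddEven_adj_iff {x y : Fin n} :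
    (hararyOddEven k n).Adj x y ↔ IsHararyOddEvenOffset k n (y - x).val := by
  have hne : x ≠ y ↔ (y - x).val ≠ 0 := by
    rw [Fin.val_sub_eq_ite, Fin.ne_iff_vne]
    split_ifs <;> omega
  rw [IsHararyOddEvenOffset, ← circDist_eq_min_val_sub, ← hne]
  rfl

instance (k n : ℕ) : DecidablePred (IsHararyOddEvenOffset k n) :=
  fun _ => inferInstanceAs (Decidable (_ ∧ _))

instance (k n : ℕ) : DecidableRel (hararyOddEven k n).Adj :=
  fun _ _ => decidable_of_iff _ hararyOddEven_adj_iff.symm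

theorem hararyOddEven_degree_eq_card_offsets (x : Fin n) :
    (hararyOddEven k n).degree x = #{d ∈ Finset.range n | IsHararyOddEvenOffset k n d} := by
  have : NeZero n := NeZero.of_pos x.pos
  rw [← card_neighborFinset_eq_degree, neighborFinset_eq_filter]
  refine Finset.card_nbij' (fun y => (y - x).val) (fun d => x + Fin.ofNat n d) ?_ ?_ ?_ ?_
  · intro y hy
    simp_all [hararyOddEven_adj_iff]
  · intro d hd
    simp_all [hararyOddEven_adj_iff, Nat.mod_eq_of_lt]
  · intro y _
    simp
  · intro d hd
    simp_all [Nat.mod_eq_of_lt]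

theorem card_filter_isHararyOddEvenOffset (hk : Odd k) (hn : Even n) (hkn : k < n) :
    #{d ∈ Finset.range n | IsHararyOddEvenOffset k n d} = k := by
  obtain ⟨r, hr⟩ := hk
  obtain ⟨m, hm⟩ := hn
  have hoffsets : {d ∈ Finset.range n | IsHararyOddEvenOffset k n d}
      = Finset.Icc 1 r ∪ Finset.Icc (n - r) (n - 1) ∪ {m} := by
    ext d
    rw [Finset.mem_filter, Finset.mem_range, IsHararyOddEvenOffset]
    simp only [Finset.mem_union, Finset.mem_Icc, Finset.mem_singleton]
    omega
  rw [hoffsets, Finset.card_union_of_disjoint, Finset.card_union_of_disjoint, Nat.card_Icc,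
    Nat.card_Icc, Finset.card_singleton]
  · omega
  · simp only [Finset.disjoint_left, Finset.mem_Icc]
    omega
  · simp only [Finset.disjoint_left, Finset.mem_union, Finset.mem_Icc, Finset.mem_singleton]
    omega

theorem hararyOddEven_exists_common_adj (hk : Odd k) (hn : Even n) (hnk : n ≤ 3 * k - 1)
    {x y : Fin n} (hxy : x ≠ y) (hnadj : ¬(hararyOddEven k n).Adj x y) :
    ∃ z, (hararyOddEven k n).Adj x z ∧ (hararyOddEven k n).Adj z y := by
  have : NeZero n := NeZero.of_pos x.pos
  suffices ∃ c : Fin n, IsHararyOddEvenOffset k n c.val ∧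
      IsHararyOddEvenOffset k n (y - x - c).val by
    obtain ⟨c, hc, hyc⟩ := this
    refine ⟨x + c, ?_, ?_⟩
    · rwa [hararyOddEven_adj_iff, add_sub_cancel_left]
    · rwa [hararyOddEven_adj_iff, sub_add_eq_sub_sub]
  have ha0 : (y - x).val ≠ 0 := by
    rw [Ne, Fin.val_eq_zero_iff, sub_eq_zero]
    exact hxy.symm
  have ha := (y - x).isLt
  rw [hararyOddEven_adj_iff, IsHararyOddEvenOffset] at hnadj
  obtain ⟨r, rfl⟩ := hk
  obtain ⟨m, rfl⟩ := hn
  simp only [IsHararyOddEvenOffset, Fin.val_sub_eq_ite (y - x)]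
  by_cases hshort : (y - x).val ≤ 2 * r
  · exact ⟨⟨r, by omega⟩, by dsimp only; split_ifs <;> omega⟩
  by_cases hlong : m + m - (y - x).val ≤ 2 * r
  · exact ⟨⟨m + m - r, by omega⟩, by dsimp only; split_ifs <;> omega⟩
  · exact ⟨⟨m, by omega⟩, by dsimp only; split_ifs <;> omega⟩

theorem hararyOddEven_exists_not_adj (hk : Odd k) (hn : Even n) (hkn : k + 1 < n) :
    ∃ x y : Fin n, x ≠ y ∧ ¬(hararyOddEven k n).Adj x y := by
  have : NeZero n := ⟨by omega⟩
  obtain ⟨r, hr⟩ := hk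
  obtain ⟨m, hm⟩ := hn
  refine ⟨0, ⟨(k - 1) / 2 + 1, by omega⟩, ?_, ?_⟩
  · simp [Fin.ext_iff]
  · rw [hararyOddEven_adj_iff, sub_zero, IsHararyOddEvenOffset]
    dsimp only
    omega

theorem hararyOddEven_small_general (k n : ℕ) (hko : Odd k) (hne : Even n)
    (h1 : k + 1 < n) (h2 : n ≤ 3 * k - 1) :
    graphDiam (hararyOddEven k n) = 2 ∧
    (∀ x : Fin n, status (hararyOddEven k n) x = 2 * n - k - 2) ∧
    wiener (hararyOddEven k n) = (1 / 2 : ℚ) * (n : ℚ) * (2 * (n : ℚ) - k - 2) := by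
  have hcommon : ∀ x y : Fin n, x ≠ y → ¬(hararyOddEven k n).Adj x y →
      ∃ z, (hararyOddEven k n).Adj x z ∧ (hararyOddEven k n).Adj z y :=
    fun _ _ => hararyOddEven_exists_common_adj hko hne h2
  have hstatus (x : Fin n) : status (hararyOddEven k n) x = 2 * n - k - 2 := by
    have := status_add_degree hcommon x
    rw [hararyOddEven_degree_eq_card_offsets,
      card_filter_isHararyOddEvenOffset hko hne (by omega), Fintype.card_fin] at this
    omega
  refine ⟨graphDiam_eq_two hcommon (hararyOddEven_exists_not_adj hko hne h1), hstatus, ?_⟩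
  rw [wiener_eq_sum_status]
  simp only [hstatus, Finset.sum_const, Finset.card_univ, Fintype.card_fin, nsmul_eq_mul]
  rw [Nat.cast_sub (by omega), Nat.cast_sub (by omega)]
  push_cast
  ring

/-- For `k` odd, `n` even, `n - 1 > k ≥ 3`, `k + 1 < n ≤ 3k - 1`: `H_{k,n}` has
diameter `2`, every vertex has status `2n - k - 2`, and
`W(H_{k,n}) = (1/2)·n·(2n-k-2)`. -/
theorem hararyOddEven_small (k n : ℕ) (hk : 3 ≤ k) (hko : Odd k) (hne : Even n)
    (h1 : k + 1 < n) (h2 : n ≤ 3 * k - 1) :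
    graphDiam (hararyOddEven k n) = 2 ∧
    (∀ x : Fin n, status (hararyOddEven k n) x = 2 * n - k - 2) ∧
    wiener (hararyOddEven k n) = (1 / 2 : ℚ) * (n : ℚ) * (2 * (n : ℚ) - k - 2) :=
  hararyOddEven_small_general k n hko hne h1 h2
end
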